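/- Let ψ_n(r) = (1/√(π n⁵)) e^{−r/n} L¹_{n−1}(2r/n), where L¹_{n−1} is the generalized Laguerre polynomial with parameter 1 and degree n−1. Then ∫₀^∞ 4π r² ψ_n(r)² dr = 1 for every positive integer n. -/

import Mathlib

/-!
Expanding the Rodrigues formula by the Leibniz rule gives
`L¹_m(z) = ∑ₖ (-1)ᵏ C(m+1, k+1) zᵏ / k!`. After the substitution `x = 2r/n` the claim becomes
`∫₀^∞ x² e^{-x} L¹_{n-1}(x)² dx = 2n²`, and integrating term by term turns the left side into
`∑ₖ ∑ⱼ cₖ cⱼ (k+j+2)!`. Since `(k+j+2)!/j!` is the rising factorial `(j+1)⁽ᵏ⁺²⁾`, the inner sum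
over `j` is an alternating binomial sum, i.e. `±` the `n`-th forward difference at `0` of a
polynomial of degree `k+2`; it vanishes unless `k ≥ n-2`, and the two surviving terms give `2n²`.
-/

open MeasureTheory Real

/-- Generalized Laguerre polynomial with parameter 1:
`L¹_m(z) = (1/m!) z⁻¹ e^z (d/dz)^m (e^{-z} z^{m+1})`. -/
noncomputable def lag (m : ℕ) (z : ℝ) : ℝ :=
  (1 / (m.factorial : ℝ)) * z⁻¹ * Real.exp z *
    iteratedDeriv m (fun t => Real.exp (-t) * t ^ (m + 1)) z

/-- The n-th radial s-orbital hydrogen wavefunction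
`ψ_n(r) = (π n⁵)^{-1/2} e^{-r/n} L¹_{n-1}(2r/n)`. -/
noncomputable def psi (n : ℕ) (r : ℝ) : ℝ :=
  (Real.sqrt (Real.pi * (n : ℝ) ^ 5))⁻¹ * Real.exp (-r / n) * lag (n - 1) (2 * r / n)

open Finset Nat fwdDiff

noncomputable def laguerreCoeff (m k : ℕ) : ℝ := (-1) ^ k * (m + 1).choose (k + 1) / k !

lemma choose_mul_descFactorial_div_factorial {m i : ℕ} (hi : i ≤ m) :
    (m.choose i * (m + 1).descFactorial (m - i) / m ! : ℝ) = (m + 1).choose (i + 1) / i ! := by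
  have hdesc : ((i + 1)! * (m + 1).descFactorial (m - i) : ℝ) = (m + 1)! := by
    have := Nat.factorial_mul_descFactorial (show m - i ≤ m + 1 by omega)
    rw [show m + 1 - (m - i) = i + 1 by omega] at this
    exact_mod_cast this
  have hchoose : ((m + 1) * m.choose i : ℝ) = (m + 1).choose (i + 1) * (i + 1) := by
    exact_mod_cast Nat.add_one_mul_choose_eq m i
  rw [div_eq_div_iff (by positivity) (by positivity)]
  push_cast [Nat.factorial_succ] at hdesc
  apply mul_left_cancel₀ (show (i : ℝ) + 1 ≠ 0 by positivity)
  linear_combination (m.choose i : ℝ) * hdesc + (m ! : ℝ) * hchoose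

lemma iteratedDeriv_exp_neg_mul_pow (m p : ℕ) (z : ℝ) :
    iteratedDeriv m (fun t => exp (-t) * t ^ p) z = ∑ i ∈ range (m + 1),
      m.choose i * (-1) ^ i * exp (-z) * (p.descFactorial (m - i) * z ^ (p - (m - i))) := by
  have h := iteratedDeriv_mul (n := m) (x := z) (f := fun t => exp ((-1) * t))
    (g := fun t => t ^ p) (by fun_prop) (by fun_prop)
  simp only [iteratedDeriv_exp_const_mul, iteratedDeriv_pow] at h
  simp only [neg_one_mul] at h
  rw [show (fun t => exp (-t) * t ^ p) = (fun t => exp (-t)) * fun t => t ^ p from rfl, h]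
  simp only [mul_assoc]

lemma lag_eq_sum_laguerreCoeff (m : ℕ) {z : ℝ} (hz : z ≠ 0) :
    lag m z = ∑ k ∈ range (m + 1), laguerreCoeff m k * z ^ k := by
  rw [lag, iteratedDeriv_exp_neg_mul_pow, mul_sum]
  refine sum_congr rfl fun i hi => ?_
  have hi : i ≤ m := Nat.lt_succ_iff.mp (mem_range.mp hi)
  rw [laguerreCoeff, mul_div_assoc, ← choose_mul_descFactorial_div_factorial hi,
    show m + 1 - (m - i) = i + 1 by omega]
  have hexp : exp z * exp (-z) = 1 := by rw [← exp_add, add_neg_cancel, exp_zero]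
  field_simp
  linear_combination (m.choose i * (m + 1).descFactorial (m - i) * z ^ (i + 1) : ℝ) * hexp

lemma integrableOn_pow_mul_exp_neg (p : ℕ) :
    IntegrableOn (fun x : ℝ => x ^ p * exp (-x)) (Set.Ioi 0) := by
  simpa [mul_comm] using GammaIntegral_convergent (s := p + 1) (by positivity)

lemma integral_pow_mul_exp_neg (p : ℕ) :
    ∫ x in Set.Ioi (0 : ℝ), x ^ p * exp (-x) = p ! := by
  simpa [mul_comm, Gamma_nat_eq_factorial] using
    (Gamma_eq_integral (s := p + 1) (by positivity)).symm

section ForwardDifference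

variable {R : Type*} [CommRing R]

lemma fwdDiff_ascPochhammer_eval (n : ℕ) :
    Δ_[1] (ascPochhammer R (n + 1)).eval =
      (n + 1 : R) • fun x => (ascPochhammer R n).eval (x + 1) := by
  funext x
  have h := congr_arg (Polynomial.eval x) (ascPochhammer_succ_comp_X_add_one (S := R) n)
  simp only [Polynomial.eval_comp, Polynomial.eval_add, Polynomial.eval_X, Polynomial.eval_one,
    nsmul_eq_mul, Polynomial.eval_mul, Polynomial.eval_natCast] at h
  simp only [fwdDiff, h, Pi.smul_apply, smul_eq_mul]
  push_cast
  ring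

lemma fwdDiff_iter_ascPochhammer_eval (q j : ℕ) (x : R) :
    Δ_[1] ^[j] (ascPochhammer R q).eval x =
      q.descFactorial j * (ascPochhammer R (q - j)).eval (x + j) := by
  induction j generalizing q x with
  | zero => simp
  | succ j ih =>
    rw [Function.iterate_succ_apply]
    cases q with
    | zero => simp [fwdDiff_iter_eq_sum_shift]
    | succ n =>
      rw [fwdDiff_ascPochhammer_eval, fwdDiff_iter_const_smul, Pi.smul_apply,
        fwdDiff_iter_comp_add 1 (fun y => (ascPochhammer R n).eval y), ih,
        Nat.succ_descFactorial_succ, Nat.add_sub_add_right]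
      push_cast
      rw [smul_eq_mul, add_assoc x, add_comm 1]
      ring

end ForwardDifference

lemma sum_laguerreCoeff_mul_factorial (m k : ℕ) :
    ∑ j ∈ range (m + 1), laguerreCoeff m j * (k + j + 2)! =
      (-1) ^ m * Δ_[1] ^[m + 1] (ascPochhammer ℝ (k + 2)).eval 0 := by
  rw [fwdDiff_iter_eq_sum_shift, mul_sum, sum_range_succ' _ (m + 1)]
  simp only [zero_smul, zero_add, ascPochhammer_ne_zero_eval_zero ℝ (show k + 2 ≠ 0 by omega),
    smul_zero, mul_zero, add_zero]
  refine sum_congr rfl fun j hj => ?_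
  have hj : j ≤ m := Nat.lt_succ_iff.mp (mem_range.mp hj)
  obtain ⟨d, rfl⟩ := Nat.exists_eq_add_of_le hj
  have hfact : ((k + j + 2)! : ℝ) = j ! * (ascPochhammer ℝ (k + 2)).eval ((j + 1 : ℕ) : ℝ) := by
    rw [ascPochhammer_nat_eq_natCast_ascFactorial, ← Nat.cast_mul, Nat.factorial_mul_ascFactorial]
    ring_nf
  rw [laguerreCoeff, hfact, show j + d + 1 - (j + 1) = d by omega]
  have hsign : ((-1 : ℝ) ^ (j + d)) * (-1) ^ d = (-1) ^ j := by
    rw [pow_add, mul_assoc, ← mul_pow]; norm_num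
  simp only [zsmul_eq_mul, nsmul_eq_mul, mul_one]
  push_cast
  field_simp
  linear_combination
    -((j + d + 1).choose (j + 1) * (ascPochhammer ℝ (k + 2)).eval ((j : ℝ) + 1) : ℝ) * hsign

lemma sum_sum_laguerreCoeff_mul_factorial (m : ℕ) :
    ∑ k ∈ range (m + 1), ∑ j ∈ range (m + 1),
      laguerreCoeff m k * laguerreCoeff m j * (k + j + 2)! = 2 * (m + 1) ^ 2 := by
  have hinner (k : ℕ) : ∑ j ∈ range (m + 1), laguerreCoeff m k * laguerreCoeff m j * (k + j + 2)! =
      laguerreCoeff m k * (-1) ^ m * (k + 2).descFactorial (m + 1) *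
        (ascPochhammer ℝ (k + 1 - m)).eval ((m : ℝ) + 1) := by
    simp_rw [mul_assoc, ← mul_sum, sum_laguerreCoeff_mul_factorial, fwdDiff_iter_ascPochhammer_eval,
      zero_add, show k + 2 - (m + 1) = k + 1 - m by omega]
    push_cast
    rfl
  simp_rw [hinner]
  cases m with
  | zero => norm_num [laguerreCoeff]
  | succ m =>
    rw [sum_range_succ, sum_range_succ, sum_eq_zero fun k hk => ?_, zero_add]
    · have hdesc : ((m + 3).descFactorial (m + 2) : ℝ) = (m + 3)! := by
        have := Nat.factorial_mul_descFactorial (show m + 2 ≤ m + 3 by omega)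
        rw [show m + 3 - (m + 2) = 1 by omega] at this
        exact_mod_cast (one_mul _).symm.trans this
      simp only [Nat.sub_self, show m + 1 + 1 - (m + 1) = 1 by omega, ascPochhammer_zero,
        ascPochhammer_one, Polynomial.eval_one, Polynomial.eval_X, Nat.descFactorial_self, hdesc,
        laguerreCoeff, Nat.choose_succ_self_right, Nat.choose_self]
      have hsq : ((-1 : ℝ) ^ m) * (-1) ^ m = 1 := by rw [← mul_pow]; norm_num
      push_cast [Nat.factorial_succ]
      field_simp
      linear_combination 2 * hsq
    · rw [Nat.descFactorial_eq_zero_iff_lt.mpr (by have := mem_range.mp hk; omega)]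
      simp

lemma integral_sq_mul_exp_neg_mul_lag_sq (m : ℕ) :
    ∫ x in Set.Ioi (0 : ℝ), x ^ 2 * exp (-x) * lag m x ^ 2 = 2 * (m + 1) ^ 2 := by
  have hexpand : Set.EqOn (fun x => x ^ 2 * exp (-x) * lag m x ^ 2)
      (fun x => ∑ k ∈ range (m + 1), ∑ j ∈ range (m + 1),
        laguerreCoeff m k * laguerreCoeff m j * (x ^ (k + j + 2) * exp (-x))) (Set.Ioi 0) := by
    intro x hx
    dsimp only
    rw [lag_eq_sum_laguerreCoeff m (ne_of_gt hx), sq (∑ k ∈ _, _), sum_mul_sum, mul_sum]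
    refine sum_congr rfl fun k _ => ?_
    rw [mul_sum]
    refine sum_congr rfl fun j _ => ?_
    ring
  have hint (k j : ℕ) := (integrableOn_pow_mul_exp_neg (k + j + 2)).const_mul
    (laguerreCoeff m k * laguerreCoeff m j)
  rw [setIntegral_congr_fun measurableSet_Ioi hexpand,
    integral_finsetSum _ fun k _ => integrable_finsetSum _ fun j _ => hint k j,
    ← sum_sum_laguerreCoeff_mul_factorial]
  refine sum_congr rfl fun k _ => ?_
  rw [integral_finsetSum _ fun j _ => hint k j]
  refine sum_congr rfl fun j _ => ?_
  rw [integral_const_mul, integral_pow_mul_exp_neg]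

theorem stmt5 (n : ℕ) (hn : 0 < n) :
    ∫ r in Set.Ioi (0:ℝ), 4 * Real.pi * r ^ 2 * (psi n r) ^ 2 = 1 := by
  have hscale (r : ℝ) : 4 * π * r ^ 2 * psi n r ^ 2 =
      (n ^ 3 : ℝ)⁻¹ * ((2 / n * r) ^ 2 * exp (-(2 / n * r)) * lag (n - 1) (2 / n * r) ^ 2) := by
    have hexp : exp (-r / n) ^ 2 = exp (-(2 / n * r)) := by
      rw [← exp_nat_mul]; congr 1; push_cast; ring
    simp only [psi, mul_pow, inv_pow, sq_sqrt (by positivity : 0 ≤ π * (n : ℝ) ^ 5), hexp]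
    field_simp
    ring
  have hchange := integral_comp_mul_left_Ioi (fun x => x ^ 2 * exp (-x) * lag (n - 1) x ^ 2) 0
    (show (0 : ℝ) < 2 / n by positivity)
  rw [mul_zero, integral_sq_mul_exp_neg_mul_lag_sq, Nat.cast_pred hn] at hchange
  simp_rw [hscale]
  rw [integral_const_mul, hchange]
  field_simp
  ring
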